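/- arXiv:1710.07410 — 2 statements merged into one kernel-verified Lean document; each statement's English description precedes it below -/
import Mathlib

section
/- With F nonempty and bounded and α > 0, a matrix X ∈ F(α) ∩ S^n_{++} maximizes log det over F(α) if and only if there exists y ∈ R^m with X^{-1} = A*(y). Moreover, if A is surjective then this y is unique. -/
/-!
At a positive definite `X` the derivative of `t ↦ det (X + t • H)` at `0` is
`det X * trace (X⁻¹ * H)`. Positive definiteness is an open condition among symmetric matrices,
so a maximiser `X` of `det` over the slice stays feasible along every symmetric direction `H` in
the kernel of the constraints, and the derivative must vanish there; by duality `X⁻¹` then lies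
in the span of the `S i`. Conversely, if `X⁻¹ = ∑ i, y i • S i` then
`trace (X⁻¹ * Y) = trace (X⁻¹ * X) = n` on the slice, and AM-GM for the eigenvalues of
`X^{-1/2} Y X^{-1/2}` gives `det Y ≤ det X`. The coefficients `y` are unique because the adjoint
of a surjective map is injective.
-/

open Matrix Polynomial Filter Topology

namespace Matrix

variable {n : Type*} [Fintype n]

theorem PosDef.eventually_posDef {X : Matrix n n ℝ} (hX : X.PosDef) :
    ∀ᶠ A in 𝓝 X, A.IsHermitian → A.PosDef := by
  have hquad : Continuous fun p : Matrix n n ℝ × (n → ℝ) => p.2 ⬝ᵥ (p.1 *ᵥ p.2) := by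
    simp only [dotProduct, mulVec]; fun_prop
  have hsphere : ∀ᶠ A in 𝓝 X, ∀ x ∈ Metric.sphere (0 : n → ℝ) 1, 0 < x ⬝ᵥ (A *ᵥ x) := by
    refine (isCompact_sphere 0 1).eventually_forall_of_forall_eventually fun x hx => ?_
    have hx0 : x ≠ 0 := ne_zero_of_mem_unit_sphere (⟨x, hx⟩ : Metric.sphere (0 : n → ℝ) 1)
    have hpos : 0 < x ⬝ᵥ (X *ᵥ x) := by simpa using hX.dotProduct_mulVec_pos hx0
    exact (hquad.tendsto (X, x)).eventually (lt_mem_nhds hpos)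
  filter_upwards [hsphere] with A hA hAh
  refine posDef_iff_dotProduct_mulVec.mpr ⟨hAh, fun x hx => ?_⟩
  have hxn : 0 < ‖x‖ := norm_pos_iff.mpr hx
  have hunit : ‖x‖⁻¹ • x ∈ Metric.sphere (0 : n → ℝ) 1 := by
    simp [norm_smul, hxn.ne']
  have := hA _ hunit
  rw [mulVec_smul, dotProduct_smul, smul_dotProduct, smul_eq_mul, smul_eq_mul, ← mul_assoc] at this
  simpa using pos_of_mul_pos_right this (by positivity)

theorem IsSymm.trace_mul_add_transpose {R : Type*} [CommRing R] {A : Matrix n n R}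
    (hA : A.IsSymm) (H : Matrix n n R) : (A * (H + Hᵀ)).trace = 2 * (A * H).trace := by
  rw [mul_add, trace_add, two_mul, ← trace_transpose (A * Hᵀ), transpose_mul, transpose_transpose,
    hA.eq, trace_mul_comm]

variable [DecidableEq n]

theorem PosSemidef.det_le_exp_trace_sub_card {M : Matrix n n ℝ} (hM : M.PosSemidef) :
    M.det ≤ Real.exp (M.trace - Fintype.card n) := by
  rw [hM.isHermitian.det_eq_prod_eigenvalues, hM.isHermitian.trace_eq_sum_eigenvalues]
  calc ∏ i, (hM.isHermitian.eigenvalues i : ℝ)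
      ≤ ∏ i, Real.exp (hM.isHermitian.eigenvalues i - 1) :=
        Finset.prod_le_prod (fun i _ => hM.eigenvalues_nonneg i) fun i _ => by
          linarith [Real.add_one_le_exp (hM.isHermitian.eigenvalues i - 1)]
    _ = Real.exp (∑ i, (hM.isHermitian.eigenvalues i : ℝ) - Fintype.card n) := by
        simp [← Real.exp_sum]

theorem PosDef.det_le_det_mul_exp {X Y : Matrix n n ℝ} (hX : X.PosDef) (hY : Y.PosSemidef) :
    Y.det ≤ X.det * Real.exp ((X⁻¹ * Y).trace - Fintype.card n) := by
  open scoped MatrixOrder in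
  obtain ⟨R, hRR, hR⟩ : ∃ R : Matrix n n ℝ, R * R = X⁻¹ ∧ R.IsHermitian :=
    ⟨CFC.sqrt X⁻¹, CFC.sqrt_mul_sqrt_self X⁻¹ hX.inv.posSemidef.nonneg,
      (CFC.sqrt_nonneg X⁻¹).posSemidef.isHermitian⟩
  have hM : (R * Y * R).PosSemidef := by
    have := hY.mul_mul_conjTranspose_same R
    rwa [hR.eq] at this
  have hdet : (R * Y * R).det = X⁻¹.det * Y.det := by
    rw [← hRR]; simp only [det_mul]; ring
  have hinv : X.det * X⁻¹.det = 1 := by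
    rw [mul_comm, X.det_nonsing_inv_mul_det hX.det_pos.ne'.isUnit]
  have := hM.det_le_exp_trace_sub_card
  rw [trace_mul_cycle, hRR, hdet] at this
  calc Y.det = X.det * (X⁻¹.det * Y.det) := by rw [← mul_assoc, hinv, one_mul]
    _ ≤ _ := mul_le_mul_of_nonneg_left this hX.det_pos.le

theorem hasDerivAt_det_one_add_smul {𝕜 : Type*} [NontriviallyNormedField 𝕜] (K : Matrix n n 𝕜) :
    HasDerivAt (fun t : 𝕜 => (1 + t • K).det) K.trace 0 := by
  have hpoly : (fun t : 𝕜 => (1 + t • K).det) =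
      fun t => (det (1 + (X : 𝕜[X]) • K.map C)).eval t := by
    ext t; simp [eval_det, ← smul_eq_mul_diagonal]
  rw [hpoly, ← derivative_det_one_add_X_smul]
  exact Polynomial.hasDerivAt _ 0

theorem hasDerivAt_det_add_smul {𝕜 : Type*} [NontriviallyNormedField 𝕜] {X : Matrix n n 𝕜}
    (hX : IsUnit X) (H : Matrix n n 𝕜) :
    HasDerivAt (fun t : 𝕜 => (X + t • H).det) (X.det * (X⁻¹ * H).trace) 0 := by
  have hfactor : ∀ t : 𝕜, X + t • H = X * (1 + t • (X⁻¹ * H)) := fun t => by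
    rw [mul_add, mul_one, mul_smul_comm, ← mul_assoc,
      mul_nonsing_inv _ ((isUnit_iff_isUnit_det X).mp hX), one_mul]
  simp only [hfactor, det_mul]
  exact (hasDerivAt_det_one_add_smul _).const_mul _

end Matrix

section Spectrahedron

variable {n m : Type*} [Fintype n] [DecidableEq n]

def spectrahedron (S : m → Matrix n n ℝ) (c : m → ℝ) : Set (Matrix n n ℝ) :=
  {X | X.PosSemidef ∧ ∀ i, (S i * X).trace = c i}

variable {S : m → Matrix n n ℝ} {c : m → ℝ} {X : Matrix n n ℝ}

theorem trace_inv_mul_eq_zero_of_isMaxOn (hXmem : X ∈ spectrahedron S c) (hX : X.PosDef)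
    (hmax : IsMaxOn det (spectrahedron S c) X) {H : Matrix n n ℝ} (hH : H.IsSymm)
    (hHS : ∀ i, (S i * H).trace = 0) : (X⁻¹ * H).trace = 0 := by
  have hline : Tendsto (fun t : ℝ => X + t • H) (𝓝 0) (𝓝 X) := by
    have : Continuous fun t : ℝ => X + t • H := by fun_prop
    simpa using this.tendsto 0
  have hmem : ∀ᶠ t in 𝓝 (0 : ℝ), X + t • H ∈ spectrahedron S c := by
    filter_upwards [hline.eventually hX.eventually_posDef] with t ht
    have hsymm : (X + t • H).IsHermitian := by
      simpa using hX.isHermitian.add ((isHermitian_iff_isSymm.mpr hH).smul (IsSelfAdjoint.all t))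
    exact ⟨(ht hsymm).posSemidef, fun i => by simp [mul_add, hXmem.2 i, hHS i]⟩
  have hlocal : IsLocalMax (fun t : ℝ => (X + t • H).det) 0 :=
    hmem.mono fun t ht => by simpa using hmax ht
  have := hlocal.hasDerivAt_eq_zero (hasDerivAt_det_add_smul hX.isUnit H)
  exact (mul_eq_zero.mp this).resolve_left hX.det_pos.ne'

variable [Fintype m]

theorem exists_inv_eq_sum_smul_of_isMaxOn (hS : ∀ i, (S i).IsSymm)
    (hXmem : X ∈ spectrahedron S c) (hX : X.PosDef) (hmax : IsMaxOn det (spectrahedron S c) X) :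
    ∃ y : m → ℝ, X⁻¹ = ∑ i, y i • S i := by
  let traceMul (A : Matrix n n ℝ) : Matrix n n ℝ →ₗ[ℝ] ℝ :=
    traceLinearMap n ℝ ℝ ∘ₗ LinearMap.mulLeft ℝ A
  have hker : ⨅ i, LinearMap.ker (traceMul (S i)) ≤ LinearMap.ker (traceMul X⁻¹) := by
    intro H hH
    simp only [Submodule.mem_iInf, LinearMap.mem_ker] at hH ⊢
    have hXinv : X⁻¹.IsSymm := isHermitian_iff_isSymm.mp hX.inv.isHermitian
    have := trace_inv_mul_eq_zero_of_isMaxOn hXmem hX hmax (isSymm_add_transpose_self H)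
      fun i => by rw [(hS i).trace_mul_add_transpose]; simpa [traceMul] using hH i
    simpa [traceMul, hXinv.trace_mul_add_transpose] using this
  obtain ⟨y, hy⟩ := (Submodule.mem_span_range_iff_exists_fun ℝ).1 (mem_span_of_iInf_ker_le_ker hker)
  refine ⟨y, ext_iff_trace_mul_right.mpr fun H => ?_⟩
  simpa [traceMul, Finset.sum_mul, trace_sum] using (LinearMap.congr_fun hy H).symm

theorem isMaxOn_det_of_inv_eq_sum_smul (hXmem : X ∈ spectrahedron S c) (hX : X.PosDef)
    {y : m → ℝ} (hy : X⁻¹ = ∑ i, y i • S i) : IsMaxOn det (spectrahedron S c) X := by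
  have htrace : ∀ Y ∈ spectrahedron S c, (X⁻¹ * Y).trace = ∑ i, y i * c i := fun Y hY => by
    simp [hy, Finset.sum_mul, trace_sum, hY.2]
  intro Y hY
  have hcard : (X⁻¹ * Y).trace = Fintype.card n := by
    rw [htrace Y hY, ← htrace X hXmem, nonsing_inv_mul _ hX.det_pos.ne'.isUnit, trace_one]
  simpa [hcard] using hX.det_le_det_mul_exp hY.1

omit [DecidableEq n] in
theorem sum_smul_injective_of_surjective
    (hsurj : Function.Surjective fun X : Matrix n n ℝ => fun i => (S i * X).trace) :
    Function.Injective fun y : m → ℝ => ∑ i, y i • S i := by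
  intro y z hyz
  obtain ⟨W, hW⟩ := hsurj (y - z)
  have hW' : ∀ i, (S i * W).trace = y i - z i := congrFun hW
  have hsq : ∑ i, (y i - z i) ^ 2 = 0 := by
    calc ∑ i, (y i - z i) ^ 2 = ∑ i, (y i - z i) * (S i * W).trace := by
          simp [hW', sq]
      _ = (((∑ i, y i • S i) - ∑ i, z i • S i) * W).trace := by
          simp [sub_mul, Finset.sum_mul, trace_sum, Finset.sum_sub_distrib]
      _ = 0 := by simp only at hyz; rw [hyz, sub_self, zero_mul, trace_zero]
  funext i
  have := (Fintype.sum_eq_zero_iff_of_nonneg fun j => sq_nonneg (y j - z j)).mp hsq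
  simpa [sub_eq_zero] using congrFun this i

end Spectrahedron

theorem stmt7_general {n m : ℕ} (S : Fin m → Matrix (Fin n) (Fin n) ℝ)
    (hS : ∀ i, (S i).IsSymm) (b : Fin m → ℝ)
    (hsurj : Function.Surjective
      (fun X : Matrix (Fin n) (Fin n) ℝ => fun i => (S i * X).trace))
    (α : ℝ)
    (Fα : Set (Matrix (Fin n) (Fin n) ℝ))
    (hFα : Fα = {X | X.PosSemidef ∧ ∀ i, (S i * X).trace = b i + α * (S i).trace})
    (X : Matrix (Fin n) (Fin n) ℝ) (hX : X ∈ Fα) (hXpd : X.PosDef) :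
    (∀ Y ∈ Fα, Y.det ≤ X.det) ↔ ∃! y : Fin m → ℝ, X⁻¹ = ∑ i, y i • S i := by
  change Fα = spectrahedron S _ at hFα
  subst hFα
  refine ⟨fun hmax => ?_, fun ⟨y, hy, _⟩ => isMaxOn_det_of_inv_eq_sum_smul hX hXpd hy⟩
  obtain ⟨y, hy⟩ := exists_inv_eq_sum_smul_of_isMaxOn hS hX hXpd hmax
  exact ⟨y, hy, fun z hz => sum_smul_injective_of_surjective hsurj (hz.symm.trans hy)⟩

theorem stmt7 {n m : ℕ} (S : Fin m → Matrix (Fin n) (Fin n) ℝ)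
    (hS : ∀ i, (S i).IsSymm) (b : Fin m → ℝ)
    (hsurj : Function.Surjective
      (fun X : Matrix (Fin n) (Fin n) ℝ => fun i => (S i * X).trace))
    (F : Set (Matrix (Fin n) (Fin n) ℝ))
    (hF : F = {X | X.PosSemidef ∧ ∀ i, (S i * X).trace = b i})
    (hne : F.Nonempty)
    (hbdd : ∃ M : ℝ, ∀ X ∈ F, ∀ i j, |X i j| ≤ M)
    (α : ℝ) (hα : 0 < α)
    (Fα : Set (Matrix (Fin n) (Fin n) ℝ))
    (hFα : Fα = {X | X.PosSemidef ∧ ∀ i, (S i * X).trace = b i + α * (S i).trace})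
    (X : Matrix (Fin n) (Fin n) ℝ) (hX : X ∈ Fα) (hXpd : X.PosDef) :
    (∀ Y ∈ Fα, Y.det ≤ X.det) ↔ ∃! y : Fin m → ℝ, X⁻¹ = ∑ i, y i • S i :=
  stmt7_general S hS b hsurj α Fα hFα X hX hXpd
end

section
/- Let A : S^n → R^m be linear with F = {X ⪰ 0 : A(X) = b} nonempty, and let P be the projection of the identity matrix I onto range(A*) in Frobenius norm. If P is positive definite, then F is bounded. -/
/-!
If `P = ∑ yᵢ Sᵢ` is positive definite, then `ε • 1 ≤ P` for some `ε > 0`, so every feasible `X ⪰ 0`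
satisfies `ε · tr X ≤ tr (P X) = ∑ yᵢ bᵢ`. The trace of a positive semidefinite matrix bounds all
its entries, because `2 |Xᵢⱼ| ≤ Xᵢᵢ + Xⱼⱼ`.
-/

open Matrix
open scoped MatrixOrder

namespace Matrix

variable {ι : Type*} [Fintype ι]

lemma PosSemidef.trace_mul_nonneg {A B : Matrix ι ι ℝ} (hA : A.PosSemidef) (hB : B.PosSemidef) :
    0 ≤ (A * B).trace := by
  classical
  obtain ⟨C, rfl⟩ := CStarAlgebra.nonneg_iff_eq_star_mul_self.mp hA.nonneg
  rw [Matrix.mul_assoc, trace_mul_comm]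
  exact (hB.mul_mul_conjTranspose_same C).trace_nonneg

lemma trace_mul_le_trace_mul_of_le {A B X : Matrix ι ι ℝ} (hAB : A ≤ B)
    (hX : X.PosSemidef) : (A * X).trace ≤ (B * X).trace := by
  have := (le_iff.mp hAB).trace_mul_nonneg hX
  rwa [Matrix.sub_mul, trace_sub, sub_nonneg] at this

lemma PosDef.exists_pos_mul_trace_le [DecidableEq ι] {P : Matrix ι ι ℝ} (hP : P.PosDef) :
    ∃ ε > 0, ∀ X : Matrix ι ι ℝ, X.PosSemidef → ε * X.trace ≤ (P * X).trace := by
  cases isEmpty_or_nonempty ι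
  · exact ⟨1, one_pos, fun X _ => by simp [trace]⟩
  obtain ⟨ε, hε, hεP⟩ : ∃ ε > 0, algebraMap ℝ (Matrix ι ι ℝ) ε ≤ P :=
    (CFC.exists_pos_algebraMap_le_iff hP.isHermitian.isSelfAdjoint).2 fun _ hx =>
      hP.isStrictlyPositive.spectrum_pos hx
  refine ⟨ε, hε, fun X hX => ?_⟩
  simpa [Algebra.algebraMap_eq_smul_one] using trace_mul_le_trace_mul_of_le hεP hX

lemma PosSemidef.two_mul_abs_apply_le {X : Matrix ι ι ℝ} (hX : X.PosSemidef) (i j : ι) :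
    2 * |X i j| ≤ X i i + X j j := by
  classical
  have hsymm : X j i = X i j := by simpa using hX.isHermitian.apply i j
  have hform (s : ℝ) : 0 ≤ X i i + 2 * s * X i j + s ^ 2 * X j j := by
    have := hX.dotProduct_mulVec_nonneg (Pi.single i 1 + s • Pi.single j 1)
    simp only [star_trivial, mulVec_add, mulVec_smul, mulVec_single_one, dotProduct_add,
      dotProduct_smul, add_dotProduct, smul_dotProduct, single_dotProduct, col_apply, one_mul,
      smul_eq_mul, hsymm] at this
    linarith
  cases abs_cases (X i j) <;> linarith [hform 1, hform (-1)]

lemma PosSemidef.abs_apply_le_trace {X : Matrix ι ι ℝ} (hX : X.PosSemidef) (i j : ι) :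
    |X i j| ≤ X.trace := by
  have hdiag (k : ι) : X k k ≤ X.trace :=
    Finset.single_le_sum (fun l _ => hX.diag_nonneg (i := l)) (Finset.mem_univ k)
  linarith [hX.two_mul_abs_apply_le i j, hdiag i, hdiag j]

end Matrix

theorem stmt17_general {n m : ℕ} (S : Fin m → Matrix (Fin n) (Fin n) ℝ)
    (b : Fin m → ℝ)
    (F : Set (Matrix (Fin n) (Fin n) ℝ))
    (hF : F = {X | X.PosSemidef ∧ ∀ i, (S i * X).trace = b i})
    (P : Matrix (Fin n) (Fin n) ℝ)
    (hPrange : ∃ y : Fin m → ℝ, P = ∑ i, y i • S i)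
    (hPpd : P.PosDef) :
    ∃ M : ℝ, ∀ X ∈ F, ∀ i j, |X i j| ≤ M := by
  obtain ⟨y, rfl⟩ := hPrange
  obtain ⟨ε, hε, hεP⟩ := hPpd.exists_pos_mul_trace_le
  refine ⟨(∑ k, y k * b k) / ε, ?_⟩
  rintro X hX i j
  rw [hF] at hX
  obtain ⟨hXpsd, hXtr⟩ := hX
  have htrace : ((∑ k, y k • S k) * X).trace = ∑ k, y k * b k := by
    simp [Finset.sum_mul, trace_sum, hXtr]
  calc |X i j| ≤ X.trace := hXpsd.abs_apply_le_trace i j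
    _ ≤ (∑ k, y k * b k) / ε := by
      rw [le_div_iff₀ hε, mul_comm, ← htrace]
      exact hεP X hXpsd

theorem stmt17 {n m : ℕ} (S : Fin m → Matrix (Fin n) (Fin n) ℝ)
    (hS : ∀ i, (S i).IsSymm) (b : Fin m → ℝ)
    (F : Set (Matrix (Fin n) (Fin n) ℝ))
    (hF : F = {X | X.PosSemidef ∧ ∀ i, (S i * X).trace = b i})
    (hne : F.Nonempty)
    (P : Matrix (Fin n) (Fin n) ℝ)
    (hPrange : ∃ y : Fin m → ℝ, P = ∑ i, y i • S i)
    (hPproj : ∀ Q : Matrix (Fin n) (Fin n) ℝ, (∃ y : Fin m → ℝ, Q = ∑ i, y i • S i) →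
      ((P - 1)ᵀ * (P - 1)).trace ≤ ((Q - 1)ᵀ * (Q - 1)).trace)
    (hPpd : P.PosDef) :
    ∃ M : ℝ, ∀ X ∈ F, ∀ i j, |X i j| ≤ M :=
  stmt17_general S b F hF P hPrange hPpd
end
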